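/- Let (S_n)_{n≥1} be the jump times of a Poisson process with intensity 1, let (σ_n)_{n≥1} be i.i.d. standard exponential random variables independent of the Poisson process, and set U_n = S_n + σ_n. Let Θ be a standard exponential random variable independent of everything else, and define τ = inf{t ≥ 0 : t + Σ_{U_n ≤ t} 1 ≥ Θ}. Then P(τ = t) = 0 for every deterministic t ≥ 0, yet for each n, P(τ = U_n | S_n, σ_n, τ ≥ U_n) = 1 - e^{-1}. -/

import Mathlib

/-!
Almost surely the `U n` are positive, pairwise distinct and tend to infinity (some interarrival
time exceeds any given level). Pathwise, `Λ` is then strictly increasing and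
right-continuous with unit jumps exactly at the `U n`, so the hitting time `τ` is read off `Λ`
and its left limits: `U n ≤ τ` iff `Λ (U n -) ≤ Θ`, and `τ = U n` iff moreover
`Θ ≤ Λ (U n) = Λ (U n -) + 1`. At a time `t` where `Λ` does not jump it is continuous, so
`τ = t` forces `Θ = Λ t ∈ t + ℕ`; this, and a jump at `t`, are null events because `Θ` and each
delay `s m` have atomless laws and are independent of what they are compared with.
Finally `Λ (U n -)` is a function of `(e, s)`, hence independent of `Θ`, and the memoryless
property `P(v ≤ Θ ≤ v + 1) = (1 - e⁻¹) P(v ≤ Θ)` for `v ≥ 0` holds uniformly in `(S n, s n)`.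
-/

open MeasureTheory ProbabilityTheory Real Set Filter Topology Function

noncomputable def hitTime (f : ℝ → ℝ) (θ : ℝ) : ℝ := sInf {t | 0 ≤ t ∧ θ ≤ f t}

section HitTime

variable {f : ℝ → ℝ} {θ a : ℝ}

lemma le_hitTime_iff (hne : {t | 0 ≤ t ∧ θ ≤ f t}.Nonempty) :
    a ≤ hitTime f θ ↔ ∀ v, 0 ≤ v → v < a → f v < θ := by
  rw [hitTime, le_csInf_iff ⟨0, fun t ht => ht.1⟩ hne]
  refine forall_congr' fun v => ⟨fun h hv hva => ?_, fun h ⟨hv, hθ⟩ => ?_⟩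
  · by_contra! hθ
    exact (h ⟨hv, hθ⟩).not_gt hva
  · by_contra! hva
    exact (h hv hva).not_ge hθ

lemma le_apply_hitTime (hne : {t | 0 ≤ t ∧ θ ≤ f t}.Nonempty)
    (hf : ContinuousWithinAt f (Ici (hitTime f θ)) (hitTime f θ)) :
    θ ≤ f (hitTime f θ) := by
  by_contra! hlt
  obtain ⟨b, hb, hfb⟩ := mem_nhdsGE_iff_exists_Ico_subset.1 (hf.eventually (gt_mem_nhds hlt))
  obtain ⟨x, hx, hxb⟩ := exists_lt_of_csInf_lt hne hb
  exact (hfb ⟨csInf_le ⟨0, fun t ht => ht.1⟩ hx, hxb⟩).not_ge hx.2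

lemma le_hitTime_iff_leftLim_le (hne : {t | 0 ≤ t ∧ θ ≤ f t}.Nonempty) (hf : StrictMono f)
    (ha : 0 < a) : a ≤ hitTime f θ ↔ leftLim f a ≤ θ := by
  rw [le_hitTime_iff hne]
  refine ⟨fun h => ?_, fun h v _ hva => ?_⟩
  · refine le_of_tendsto (hf.monotone.tendsto_leftLim a) ?_
    filter_upwards [Ioo_mem_nhdsLT ha] with v hv using (h v hv.1.le hv.2).le
  · obtain ⟨w, hvw, hwa⟩ := exists_between hva
    exact (hf hvw).trans_le ((hf.monotone.le_leftLim hwa).trans h)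

lemma hitTime_eq_iff (hne : {t | 0 ≤ t ∧ θ ≤ f t}.Nonempty) (hf : StrictMono f)
    (hcont : ContinuousWithinAt f (Ici a) a) (ha : 0 < a) :
    hitTime f θ = a ↔ leftLim f a ≤ θ ∧ θ ≤ f a := by
  refine ⟨fun h => ⟨(le_hitTime_iff_leftLim_le hne hf ha).1 h.ge,
    h ▸ le_apply_hitTime hne (h ▸ hcont)⟩, fun ⟨hl, hr⟩ => le_antisymm ?_
    ((le_hitTime_iff_leftLim_le hne hf ha).2 hl)⟩
  exact csInf_le ⟨0, fun t ht => ht.1⟩ ⟨ha.le, hr⟩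

end HitTime

noncomputable def clock {ι : Type*} (u : ι → ℝ) (t : ℝ) : ℝ :=
  t + ∑' m, if u m ≤ t then (1 : ℝ) else 0

section Clock

variable {ι : Type*} {u : ι → ℝ} {θ t : ℝ}

lemma tsum_ite_eq_ncard {p : ι → Prop} [DecidablePred p] (h : {m | p m}.Finite) :
    ∑' m, (if p m then (1 : ℝ) else 0) = {m | p m}.ncard := by
  rw [tsum_eq_sum (s := h.toFinset) fun m hm => if_neg (by simpa using hm), Finset.sum_boole,
    Set.ncard_eq_toFinset_card _ h]
  congr 2
  ext m
  simp

lemma self_le_clock : t ≤ clock u t :=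
  le_add_of_nonneg_right (tsum_nonneg fun m => by positivity)

lemma nonempty_setOf_le_clock : {t | 0 ≤ t ∧ θ ≤ clock u t}.Nonempty :=
  ⟨max θ 0, le_max_right _ _, (le_max_left _ _).trans self_le_clock⟩

lemma finite_setOf_le (hu : Tendsto u cofinite atTop) (t : ℝ) : {m | u m ≤ t}.Finite := by
  simpa only [not_lt] using eventually_cofinite.1 (hu.eventually_gt_atTop t)

lemma eventually_nhdsGE_le_iff (hu : Tendsto u cofinite atTop) (t : ℝ) :
    ∀ᶠ w in 𝓝[≥] t, ∀ m, u m ≤ w ↔ u m ≤ t := by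
  have hnear : ∀ m, ∀ᶠ w in 𝓝[≥] t, u m ≤ w ↔ u m ≤ t := fun m => by
    rcases le_or_gt (u m) t with h | h
    · filter_upwards [self_mem_nhdsWithin] with w (hw : t ≤ w) using iff_of_true (h.trans hw) h
    · filter_upwards [Ico_mem_nhdsGE h] with w hw using iff_of_false hw.2.not_ge h.not_ge
  filter_upwards [(finite_setOf_le hu (t + 1)).eventually_all.2 fun m _ => hnear m,
    Ico_mem_nhdsGE (lt_add_one t)] with w hw hwt m
  by_cases hm : u m ≤ t + 1
  · exact hw m hm
  · exact iff_of_false (fun h => hm (h.trans hwt.2.le)) (fun h => hm (by linarith))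

lemma eventually_nhdsLT_le_iff (hu : Tendsto u cofinite atTop) (a : ℝ) :
    ∀ᶠ v in 𝓝[<] a, ∀ m, u m ≤ v ↔ u m < a := by
  have hnear : ∀ m, ∀ᶠ v in 𝓝[<] a, u m ≤ v ↔ u m < a := fun m => by
    rcases lt_or_ge (u m) a with h | h
    · filter_upwards [Ioo_mem_nhdsLT h] with v hv using iff_of_true hv.1.le h
    · filter_upwards [self_mem_nhdsWithin] with v (hv : v < a) using
        iff_of_false (fun h' => (h'.trans_lt hv).not_ge h) h.not_gt
  filter_upwards [(finite_setOf_le hu a).eventually_all.2 fun m _ => hnear m,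
    self_mem_nhdsWithin] with v hv (hva : v < a) m
  by_cases hm : u m ≤ a
  · exact hv m hm
  · exact iff_of_false (fun h => hm (h.trans hva.le)) (fun h => hm h.le)

lemma strictMono_clock (hu : Tendsto u cofinite atTop) : StrictMono (clock u) := by
  refine strictMono_id.add_monotone fun s t hst => ?_
  simp only [tsum_ite_eq_ncard (finite_setOf_le hu _)]
  exact_mod_cast Set.ncard_le_ncard (fun m (hm : u m ≤ s) => hm.trans hst) (finite_setOf_le hu t)

lemma continuousWithinAt_clock (hu : Tendsto u cofinite atTop) (t : ℝ) :
    ContinuousWithinAt (clock u) (Ici t) t := by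
  refine (continuous_add_const _).continuousWithinAt.congr_of_eventuallyEq ?_ rfl
  filter_upwards [eventually_nhdsGE_le_iff hu t] with w hw
  simp only [clock, hw]

lemma leftLim_clock (hu : Tendsto u cofinite atTop) (a : ℝ) :
    leftLim (clock u) a = a + ∑' m, if u m < a then (1 : ℝ) else 0 := by
  refine leftLim_eq_of_tendsto (((continuous_add_const _).tendsto a).mono_left
    nhdsWithin_le_nhds |>.congr' ?_)
  filter_upwards [eventually_nhdsLT_le_iff hu a] with v hv
  simp only [clock, hv]

lemma leftLim_clock_of_forall_ne (hu : Tendsto u cofinite atTop) (ht : ∀ m, u m ≠ t) :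
    leftLim (clock u) t = clock u t := by
  simp only [leftLim_clock hu, clock, lt_iff_le_and_ne, ht, ne_eq, not_false_eq_true, and_true]

lemma leftLim_clock_eq_sub_one (hu : Tendsto u cofinite atTop) {n : ι}
    (hn : ∀ m, u m = u n → m = n) : leftLim (clock u) (u n) = clock u (u n) - 1 := by
  have hlt : {m | u m < u n}.Finite :=
    (finite_setOf_le hu (u n)).subset fun m (hm : u m < u n) => hm.le
  have hle : {m | u m ≤ u n} = insert n {m | u m < u n} := by
    ext m
    simp only [mem_ofPred_eq, mem_insert_iff, le_iff_lt_or_eq]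
    exact ⟨fun h => h.elim Or.inr fun h => Or.inl (hn m h),
      fun h => h.elim (fun h => Or.inr (h ▸ rfl)) Or.inl⟩
  rw [leftLim_clock hu, clock, tsum_ite_eq_ncard hlt, tsum_ite_eq_ncard (finite_setOf_le hu _),
    hle, Set.ncard_insert_of_notMem (a := n) (lt_irrefl (u n)) hlt]
  push_cast
  ring

lemma hitTime_clock_ne (hu : Tendsto u cofinite atTop) (hpos : ∀ m, 0 < u m) (hθ : 0 < θ)
    (ht : 0 ≤ t) (hut : ∀ m, u m ≠ t) (hθt : θ ≠ clock u t) : hitTime (clock u) θ ≠ t := by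
  intro h
  rcases ht.eq_or_lt with rfl | ht
  · have hθ0 : θ ≤ clock u (hitTime (clock u) θ) :=
      le_apply_hitTime nonempty_setOf_le_clock (continuousWithinAt_clock hu _)
    simp only [clock, h, (hpos _).not_ge, ↓reduceIte, tsum_zero, add_zero] at hθ0
    linarith
  · obtain ⟨hl, hr⟩ := (hitTime_eq_iff nonempty_setOf_le_clock (strictMono_clock hu)
      (continuousWithinAt_clock hu t) ht).1 h
    rw [leftLim_clock_of_forall_ne hu hut] at hl
    exact hθt (le_antisymm hr hl)

lemma le_hitTime_clock_iff (hu : Tendsto u cofinite atTop) {n : ι} (hn : 0 < u n)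
    (hinj : ∀ m, u m = u n → m = n) : u n ≤ hitTime (clock u) θ ↔ clock u (u n) - 1 ≤ θ := by
  rw [le_hitTime_iff_leftLim_le nonempty_setOf_le_clock (strictMono_clock hu) hn,
    leftLim_clock_eq_sub_one hu hinj]

lemma hitTime_clock_eq_iff (hu : Tendsto u cofinite atTop) {n : ι} (hn : 0 < u n)
    (hinj : ∀ m, u m = u n → m = n) :
    hitTime (clock u) θ = u n ↔ clock u (u n) - 1 ≤ θ ∧ θ ≤ clock u (u n) := by
  rw [hitTime_eq_iff nonempty_setOf_le_clock (strictMono_clock hu)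
    (continuousWithinAt_clock hu _) hn, leftLim_clock_eq_sub_one hu hinj]

end Clock

section Exponential

variable {r : ℝ}

instance nullSingletonClass_expMeasure : NullSingletonClass (expMeasure r) := by
  unfold expMeasure gammaMeasure
  infer_instance

lemma expMeasure_Iic (hr : 0 < r) {x : ℝ} (hx : 0 ≤ x) :
    expMeasure r (Iic x) = ENNReal.ofReal (1 - exp (-(r * x))) := by
  have := isProbabilityMeasure_expMeasure hr
  rw [← ofReal_cdf, cdf_expMeasure_eq hr, if_pos hx]

lemma expMeasure_Iic_lt_one (hr : 0 < r) (x : ℝ) : expMeasure r (Iic x) < 1 := by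
  have := isProbabilityMeasure_expMeasure hr
  rw [← ofReal_cdf, cdf_expMeasure_eq hr]
  split_ifs
  · exact ENNReal.ofReal_lt_one.2 (sub_lt_self _ (exp_pos _))
  · simp

lemma expMeasure_Ici (hr : 0 < r) {x : ℝ} (hx : 0 ≤ x) :
    expMeasure r (Ici x) = ENNReal.ofReal (exp (-(r * x))) := by
  have := isProbabilityMeasure_expMeasure hr
  rw [← compl_Iio, prob_compl_eq_one_sub measurableSet_Iio, measure_congr Iio_ae_eq_Iic,
    expMeasure_Iic hr hx, ← ENNReal.ofReal_one, ← ENNReal.ofReal_sub _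
      (sub_nonneg.2 (exp_le_one_iff.2 (neg_nonpos.2 (mul_nonneg hr.le hx))))]
  congr 1
  ring

lemma expMeasure_Icc_eq_mul_Ici (hr : 0 < r) {x h : ℝ} (hx : 0 ≤ x) (hh : 0 ≤ h) :
    expMeasure r (Icc x (x + h)) =
      ENNReal.ofReal (1 - exp (-(r * h))) * expMeasure r (Ici x) := by
  have := isProbabilityMeasure_expMeasure hr
  have hsplit : Icc x (x + h) = Ici x \ Ioi (x + h) := by
    ext y
    simp
  rw [hsplit, measure_sdiff (Ioi_subset_Ici (by linarith))
      measurableSet_Ioi.nullMeasurableSet (measure_ne_top _ _), measure_congr Ioi_ae_eq_Ici,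
    expMeasure_Ici hr hx, expMeasure_Ici hr (by linarith), ← ENNReal.ofReal_sub _ (by positivity),
    ← ENNReal.ofReal_mul (sub_nonneg.2 (exp_le_one_iff.2 (neg_nonpos.2 (mul_nonneg hr.le hh))))]
  congr 1
  rw [mul_add, neg_add, exp_add]
  ring

lemma ae_pos_of_map_eq_expMeasure {Ω : Type*} {mΩ : MeasurableSpace Ω} {P : Measure Ω}
    {X : Ω → ℝ} (hX : AEMeasurable X P) (hlaw : P.map X = expMeasure r) (hr : 0 < r) :
    ∀ᵐ ω ∂P, 0 < X ω := by
  refine ae_of_ae_map hX (hlaw ▸ ?_)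
  simp only [ae_iff, not_lt]
  exact (expMeasure_Iic hr le_rfl).trans (by simp)

end Exponential

namespace ProbabilityTheory

variable {Ω : Type*} {mΩ : MeasurableSpace Ω} {P : Measure Ω}

lemma iIndepFun.ae_exists_notMem {β : Type*} {mβ : MeasurableSpace β} {X : ℕ → Ω → β}
    (hind : iIndepFun X P) (hX : ∀ k, Measurable (X k)) {ν : Measure β}
    (hlaw : ∀ k, P.map (X k) = ν) {B : Set β} (hB : MeasurableSet B) (hνB : ν B < 1) :
    ∀ᵐ ω ∂P, ∃ k, X k ω ∉ B := by
  simp only [ae_iff, not_exists, not_not]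
  refine le_antisymm (ge_of_tendsto' (ENNReal.tendsto_pow_atTop_nhds_zero_of_lt_one hνB)
    fun K => ?_) bot_le
  calc P {ω | ∀ k, X k ω ∈ B} ≤ P (⋂ k ∈ Finset.range K, X k ⁻¹' B) :=
        measure_mono fun ω hω => mem_iInter₂.2 fun k _ => hω k
    _ = ν B ^ K := by
        rw [hind.measure_inter_preimage_eq_mul _ fun _ _ => hB, Finset.prod_congr rfl
          fun k _ => by rw [← Measure.map_apply (hX k) hB, hlaw k], Finset.prod_const,
          Finset.card_range]

lemma measurable_iSup_compl {ι β : Type*} {mβ : MeasurableSpace β} {Z : ι → Ω → β} {i j : ι}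
    (hji : j ≠ i) : Measurable[⨆ k ∈ ({i}ᶜ : Set ι), mβ.comap (Z k)] (Z j) :=
  Measurable.of_comap_le (le_iSup₂ (f := fun k (_ : k ∈ ({i}ᶜ : Set ι)) => mβ.comap (Z k)) j hji)

lemma iIndepFun.indepFun_of_measurable_iSup_compl {ι β γ : Type*} {mβ : MeasurableSpace β}
    {mγ : MeasurableSpace γ} {Z : ι → Ω → β} (hind : iIndepFun Z P) (hZ : ∀ i, Measurable (Z i))
    {i : ι} {Y : Ω → γ} (hY : Measurable[⨆ j ∈ ({i}ᶜ : Set ι), mβ.comap (Z j)] Y) :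
    IndepFun Y (Z i) P := by
  have h := indep_iSup_of_disjoint (fun j => (hZ j).comap_le)
    ((iIndepFun_iff_iIndep _ _ _).1 hind) (disjoint_compl_left (a := ({i} : Set ι)))
  simp only [mem_singleton_iff, iSup_iSup_eq_left] at h
  rw [IndepFun_iff_Indep]
  exact indep_of_indep_of_le_left h hY.comap_le

variable [IsProbabilityMeasure P]

lemma IndepFun.measure_preimage_prodMk_eq_lintegral {α : Type*} {mα : MeasurableSpace α}
    {W : Ω → α} {X : Ω → ℝ} (hind : IndepFun W X P) (hW : Measurable W) (hX : Measurable X)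
    {C : Set (α × ℝ)} (hC : MeasurableSet C) :
    P ((fun ω => (W ω, X ω)) ⁻¹' C) = ∫⁻ ω, P.map X (Prod.mk (W ω) ⁻¹' C) ∂P := by
  rw [← Measure.map_apply (hW.prodMk hX) hC,
    (indepFun_iff_map_prod_eq_prod_map_map hW.aemeasurable hX.aemeasurable).1 hind,
    Measure.prod_apply hC, lintegral_map (measurable_measure_prodMk_left hC) hW]

lemma IndepFun.measure_eq_zero {Y X : Ω → ℝ} (hind : IndepFun Y X P) (hY : Measurable Y)
    (hX : Measurable X) {ν : Measure ℝ} [NullSingletonClass ν] (hlaw : P.map X = ν) :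
    P {ω | Y ω = X ω} = 0 := by
  have hslice : ∀ y : ℝ, Prod.mk y ⁻¹' diagonal ℝ = {y} := fun y => by ext; simp [eq_comm]
  change P ((fun ω => (Y ω, X ω)) ⁻¹' diagonal ℝ) = 0
  simpa [hslice, hlaw] using hind.measure_preimage_prodMk_eq_lintegral hY hX measurableSet_diagonal

lemma iIndepFun.measure_eq_zero {ι : Type*} {Z : ι → Ω → ℝ} (hind : iIndepFun Z P)
    (hZ : ∀ i, Measurable (Z i)) {i : ι} {ν : Measure ℝ} [NullSingletonClass ν]
    (hlaw : P.map (Z i) = ν) {Y : Ω → ℝ}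
    (hY : Measurable[⨆ j ∈ ({i}ᶜ : Set ι), MeasurableSpace.comap (Z j) inferInstance] Y) :
    P {ω | Y ω = Z i ω} = 0 :=
  (hind.indepFun_of_measurable_iSup_compl hZ hY).measure_eq_zero
    (hY.mono (iSup₂_le fun j _ => (hZ j).comap_le) le_rfl) (hZ i) hlaw

lemma IndepFun.measure_le_le_add_inter_eq_mul {β : Type*} {mβ : MeasurableSpace β}
    {V Θ : Ω → ℝ} {G : Ω → β} (hind : IndepFun (fun ω => (V ω, G ω)) Θ P) (hV : Measurable V)
    (hG : Measurable G) (hΘ : Measurable Θ) {r h : ℝ} (hr : 0 < r) (hh : 0 ≤ h)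
    (hlaw : P.map Θ = expMeasure r) (hV0 : ∀ᵐ ω ∂P, 0 ≤ V ω) {E : Set β}
    (hE : MeasurableSet E) :
    P ({ω | V ω ≤ Θ ω ∧ Θ ω ≤ V ω + h} ∩ G ⁻¹' E) =
      ENNReal.ofReal (1 - exp (-(r * h))) * P ({ω | V ω ≤ Θ ω} ∩ G ⁻¹' E) := by
  set C : Set ((ℝ × β) × ℝ) := {p | (p.1.1 ≤ p.2 ∧ p.2 ≤ p.1.1 + h) ∧ p.1.2 ∈ E}
  set D : Set ((ℝ × β) × ℝ) := {p | p.1.1 ≤ p.2 ∧ p.1.2 ∈ E}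
  have hC : MeasurableSet C := by measurability
  have hD : MeasurableSet D := by measurability
  change P ((fun ω => ((V ω, G ω), Θ ω)) ⁻¹' C) =
    _ * P ((fun ω => ((V ω, G ω), Θ ω)) ⁻¹' D)
  rw [hind.measure_preimage_prodMk_eq_lintegral (hV.prodMk hG) hΘ hC,
    hind.measure_preimage_prodMk_eq_lintegral (hV.prodMk hG) hΘ hD,
    ← lintegral_const_mul' _ _ ENNReal.ofReal_ne_top]
  refine lintegral_congr_ae ?_
  filter_upwards [hV0] with ω hω
  by_cases hGω : G ω ∈ E
  · have hCω : Prod.mk (V ω, G ω) ⁻¹' C = Icc (V ω) (V ω + h) := by ext; simp [C, hGω]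
    have hDω : Prod.mk (V ω, G ω) ⁻¹' D = Ici (V ω) := by ext; simp [D, hGω]
    rw [hCω, hDω, hlaw, expMeasure_Icc_eq_mul_Ici hr hω hh]
  · have hCω : Prod.mk (V ω, G ω) ⁻¹' C = ∅ := by ext; simp [C, hGω]
    have hDω : Prod.mk (V ω, G ω) ⁻¹' D = ∅ := by ext; simp [D, hGω]
    simp [hCω, hDω]

end ProbabilityTheory

lemma condExp_indicator_ae_eq_const {Ω : Type*} {m m0 : MeasurableSpace Ω} {μ : Measure Ω}
    [IsFiniteMeasure μ] (hm : m ≤ m0) {T : Set Ω} (hT : MeasurableSet T) {c : ℝ} (hc : 0 ≤ c)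
    (h : ∀ A, MeasurableSet[m] A → μ (T ∩ A) = ENNReal.ofReal c * μ A) :
    μ[T.indicator (fun _ => (1 : ℝ)) | m] =ᵐ[μ] fun _ => c := by
  refine (ae_eq_condExp_of_forall_setIntegral_eq hm ((integrable_const 1).indicator hT)
    (fun _ _ _ => integrableOn_const) (fun A hA _ => ?_) aestronglyMeasurable_const).symm
  rw [setIntegral_const, setIntegral_indicator hT, setIntegral_const, inter_comm, measureReal_def,
    measureReal_def, h A hA, ENNReal.toReal_mul, ENNReal.toReal_ofReal hc, smul_eq_mul,
    smul_eq_mul, mul_one, mul_comm]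

lemma measurable_clock {ι Ω : Type*} [Countable ι] {mΩ : MeasurableSpace Ω} {U : ι → Ω → ℝ}
    (hU : ∀ m, Measurable (U m)) {T : Ω → ℝ} (hT : Measurable T) :
    Measurable fun ω => clock (U · ω) (T ω) :=
  hT.add (Measurable.tsum fun m =>
    Measurable.ite (measurableSet_le (hU m) hT) measurable_const measurable_const)

section HitTimeOfClock

variable {Ω ι : Type*} [Countable ι] {mΩ : MeasurableSpace Ω} {P : Measure Ω}
  {U : ι → Ω → ℝ} {Θ : Ω → ℝ}

lemma measure_hitTime_clock_eq_zero (hU : ∀ᵐ ω ∂P, Tendsto (U · ω) cofinite atTop)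
    (hUpos : ∀ᵐ ω ∂P, ∀ m, 0 < U m ω) (hΘpos : ∀ᵐ ω ∂P, 0 < Θ ω) (hΘ : AEMeasurable Θ P)
    {ν : Measure ℝ} [NullSingletonClass ν] (hlaw : P.map Θ = ν) {t : ℝ} (ht : 0 ≤ t)
    (hUt : ∀ m, P {ω | U m ω = t} = 0) :
    P {ω | hitTime (clock (U · ω)) (Θ ω) = t} = 0 := by
  -- `clock u t` lies in the countable set `t + ℕ`, which the atomless `Θ` avoids almost surely
  have hΘt : ∀ᵐ ω ∂P, Θ ω ∉ range fun k : ℕ => t + k :=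
    ae_of_ae_map hΘ (hlaw ▸ (countable_range _).ae_notMem ν)
  have hUt' : ∀ᵐ ω ∂P, ∀ m, U m ω ≠ t :=
    ae_all_iff.2 fun m => measure_eq_zero_iff_ae_notMem.1 (hUt m)
  refine measure_eq_zero_iff_ae_notMem.2 ?_
  filter_upwards [hU, hUpos, hΘpos, hΘt, hUt'] with ω hu hpos hθ hΘω hUω
  refine hitTime_clock_ne hu hpos hθ ht hUω fun h => hΘω ⟨{m | U m ω ≤ t}.ncard, ?_⟩
  rw [h, clock, tsum_ite_eq_ncard (finite_setOf_le hu t)]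

lemma condExp_indicator_hitTime_clock_ae_eq [IsProbabilityMeasure P] {β : Type*}
    {mβ : MeasurableSpace β} {G : Ω → β} {n : ι} (hUm : ∀ m, Measurable (U m))
    (hΘ : Measurable Θ) (hG : Measurable G) (hU : ∀ᵐ ω ∂P, Tendsto (U · ω) cofinite atTop)
    (hUn : ∀ᵐ ω ∂P, 0 < U n ω) (hinj : ∀ᵐ ω ∂P, ∀ m, U m ω = U n ω → m = n)
    (hind : IndepFun (fun ω => (clock (U · ω) (U n ω) - 1, G ω)) Θ P)
    (hlaw : P.map Θ = expMeasure 1) :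
    (P[|{ω | U n ω ≤ hitTime (clock (U · ω)) (Θ ω)}])[
        {ω | hitTime (clock (U · ω)) (Θ ω) = U n ω}.indicator (fun _ => (1 : ℝ)) | mβ.comap G]
      =ᵐ[P[|{ω | U n ω ≤ hitTime (clock (U · ω)) (Θ ω)}]] fun _ => 1 - exp (-1) := by
  set V : Ω → ℝ := fun ω => clock (U · ω) (U n ω) - 1
  have hV : Measurable V := (measurable_clock hUm (hUm n)).sub_const 1
  have hV0 : ∀ᵐ ω ∂P, 0 ≤ V ω := by
    filter_upwards [hU, hUn, hinj] with ω hu hn hinj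
    show 0 ≤ clock _ (U n ω) - 1
    rw [← leftLim_clock_eq_sub_one hu hinj]
    exact self_le_clock.trans ((strictMono_clock hu).monotone.le_leftLim hn)
  have hB : {ω | U n ω ≤ hitTime (clock (U · ω)) (Θ ω)} =ᵐ[P] {ω | V ω ≤ Θ ω} := by
    filter_upwards [hU, hUn, hinj] with ω hu hn hinj
    exact propext (le_hitTime_clock_iff hu hn hinj)
  have hT : {ω | hitTime (clock (U · ω)) (Θ ω) = U n ω} =ᵐ[P]
      {ω | V ω ≤ Θ ω ∧ Θ ω ≤ V ω + 1} := by
    filter_upwards [hU, hUn, hinj] with ω hu hn hinj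
    exact propext ((hitTime_clock_eq_iff hu hn hinj).trans (by simp only [V, sub_add_cancel]; rfl))
  have hTm : MeasurableSet {ω | V ω ≤ Θ ω ∧ Θ ω ≤ V ω + 1} :=
    (measurableSet_le hV hΘ).inter (measurableSet_le hΘ (hV.add_const 1))
  have hcond : P[|{ω | U n ω ≤ hitTime (clock (U · ω)) (Θ ω)}] = P[|{ω | V ω ≤ Θ ω}] := by
    unfold ProbabilityTheory.cond
    rw [measure_congr hB, Measure.restrict_congr_set hB]
  rw [hcond]
  refine (condExp_congr_ae (indicator_ae_eq_of_ae_eq_set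
    (hT.filter_mono cond_absolutelyContinuous.ae_le))).trans
    (condExp_indicator_ae_eq_const hG.comap_le hTm (sub_nonneg.2 (exp_le_one_iff.2 (by norm_num)))
      ?_)
  rintro _ ⟨E, hE, rfl⟩
  have hTB : {ω | V ω ≤ Θ ω} ∩ {ω | V ω ≤ Θ ω ∧ Θ ω ≤ V ω + 1} =
      {ω | V ω ≤ Θ ω ∧ Θ ω ≤ V ω + 1} := inter_eq_right.2 fun ω h => h.1
  rw [cond_apply' (hTm.inter (hG hE)), cond_apply' (hG hE), ← inter_assoc, hTB,
    hind.measure_le_le_add_inter_eq_mul (V := V) hV hG hΘ one_pos zero_le_one hlaw hV0 hE,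
    mul_one, mul_left_comm]

end HitTimeOfClock

lemma tendsto_sum_range_add_atTop {e s : ℕ → ℝ} (he : ∀ k, 0 ≤ e k) (hs : ∀ n, 0 ≤ s n)
    (hunb : ∀ N : ℕ, ∃ k, (N : ℝ) < e k) :
    Tendsto (fun n => ∑ k ∈ Finset.range (n + 1), e k + s n) atTop atTop := by
  refine tendsto_atTop_atTop.2 fun b => ?_
  obtain ⟨k, hk⟩ := hunb ⌈b⌉₊
  refine ⟨k, fun n hn => ?_⟩
  calc b ≤ ⌈b⌉₊ := Nat.le_ceil b
    _ ≤ e k := hk.le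
    _ ≤ ∑ i ∈ Finset.range (n + 1), e i :=
        Finset.single_le_sum (fun i _ => he i) (Finset.mem_range.2 (by omega))
    _ ≤ _ := le_add_of_nonneg_right (hs n)

noncomputable def announcedTime {Ω : Type*} (e s : ℕ → Ω → ℝ) (n : ℕ) (ω : Ω) : ℝ :=
  ∑ k ∈ Finset.range (n + 1), e k ω + s n ω

def jointFamily {Ω : Type*} (e s : ℕ → Ω → ℝ) (Θ : Ω → ℝ) : ℕ ⊕ ℕ ⊕ Unit → Ω → ℝ :=
  Sum.elim e (Sum.elim s fun _ => Θ)

section AnnouncedTime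

variable {Ω : Type*} {mΩ : MeasurableSpace Ω} {P : Measure Ω} {e s : ℕ → Ω → ℝ} {Θ : Ω → ℝ}

lemma measurable_announcedTime {m : MeasurableSpace Ω} (he : ∀ k, Measurable[m] (e k)) {n : ℕ}
    (hs : Measurable[m] (s n)) : Measurable[m] (announcedTime e s n) :=
  (Finset.measurable_sum _ fun k _ => he k).add hs

lemma ae_tendsto_announcedTime (hind : iIndepFun e P) (he : ∀ k, Measurable (e k))
    (hlaw : ∀ k, P.map (e k) = expMeasure 1) (hs : ∀ᵐ ω ∂P, ∀ n, 0 ≤ s n ω) :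
    ∀ᵐ ω ∂P, Tendsto (announcedTime e s · ω) cofinite atTop := by
  have hunb : ∀ᵐ ω ∂P, ∀ N : ℕ, ∃ k, e k ω ∉ Iic (N : ℝ) := ae_all_iff.2 fun N =>
    hind.ae_exists_notMem he hlaw measurableSet_Iic (expMeasure_Iic_lt_one one_pos N)
  have hepos : ∀ᵐ ω ∂P, ∀ k, 0 < e k ω :=
    ae_all_iff.2 fun k => ae_pos_of_map_eq_expMeasure (he k).aemeasurable (hlaw k) one_pos
  filter_upwards [hunb, hepos, hs] with ω hN he hs
  rw [Nat.cofinite_eq_atTop]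
  exact tendsto_sum_range_add_atTop (fun k => (he k).le) hs fun N =>
    (hN N).imp fun k hk => not_le.1 hk

lemma indepFun_announcedTime_clock (hind : iIndepFun (jointFamily e s Θ) P)
    (hZ : ∀ j, Measurable (jointFamily e s Θ j)) (n : ℕ) :
    IndepFun (fun ω => (clock (announcedTime e s · ω) (announcedTime e s n ω) - 1,
      ∑ k ∈ Finset.range (n + 1), e k ω, s n ω)) Θ P := by
  set 𝓕 := ⨆ j ∈ ({.inr (.inr ())}ᶜ : Set (ℕ ⊕ ℕ ⊕ Unit)),
    MeasurableSpace.comap (jointFamily e s Θ j) inferInstance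
  have he : ∀ k, Measurable[𝓕] (e k) := fun k =>
    measurable_iSup_compl (Z := jointFamily e s Θ) (j := .inl k) (by simp)
  have hs : ∀ k, Measurable[𝓕] (s k) := fun k =>
    measurable_iSup_compl (Z := jointFamily e s Θ) (j := .inr (.inl k)) (by simp)
  have hU : ∀ m, Measurable[𝓕] (announcedTime e s m) := fun m => measurable_announcedTime he (hs m)
  exact hind.indepFun_of_measurable_iSup_compl hZ (i := .inr (.inr ()))
    (((measurable_clock hU (hU n)).sub_const 1).prodMk
      ((Finset.measurable_sum _ fun k _ => he k).prodMk (hs n)))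

variable [IsProbabilityMeasure P]

lemma measure_announcedTime_eq_zero (hind : iIndepFun (jointFamily e s Θ) P)
    (hZ : ∀ j, Measurable (jointFamily e s Θ j)) {n : ℕ} (hlaw : P.map (s n) = expMeasure 1)
    (t : ℝ) : P {ω | announcedTime e s n ω = t} = 0 := by
  set 𝓕 := ⨆ j ∈ ({.inr (.inl n)}ᶜ : Set (ℕ ⊕ ℕ ⊕ Unit)),
    MeasurableSpace.comap (jointFamily e s Θ j) inferInstance
  have hY : Measurable[𝓕] fun ω => t - ∑ k ∈ Finset.range (n + 1), e k ω :=
    measurable_const.sub (Finset.measurable_sum _ fun k _ =>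
      measurable_iSup_compl (Z := jointFamily e s Θ) (j := .inl k) (by simp))
  have hset : {ω | announcedTime e s n ω = t} =
      {ω | t - ∑ k ∈ Finset.range (n + 1), e k ω = s n ω} := by
    ext ω
    simp only [announcedTime, mem_ofPred_eq]
    constructor <;> intro h <;> linarith
  rw [hset]
  exact hind.measure_eq_zero hZ (i := .inr (.inl n)) hlaw hY

lemma ae_announcedTime_eq_imp_eq (hind : iIndepFun (jointFamily e s Θ) P)
    (hZ : ∀ j, Measurable (jointFamily e s Θ j)) {n : ℕ} (hlaw : P.map (s n) = expMeasure 1) :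
    ∀ᵐ ω ∂P, ∀ m, announcedTime e s m ω = announcedTime e s n ω → m = n := by
  refine ae_all_iff.2 fun m => ?_
  rcases eq_or_ne m n with rfl | hmn
  · exact ae_of_all _ fun _ _ => rfl
  set 𝓕 := ⨆ j ∈ ({.inr (.inl n)}ᶜ : Set (ℕ ⊕ ℕ ⊕ Unit)),
    MeasurableSpace.comap (jointFamily e s Θ j) inferInstance
  have he : ∀ k, Measurable[𝓕] (e k) := fun k =>
    measurable_iSup_compl (Z := jointFamily e s Θ) (j := .inl k) (by simp)
  have hY : Measurable[𝓕] fun ω => announcedTime e s m ω - ∑ k ∈ Finset.range (n + 1), e k ω :=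
    (measurable_announcedTime he (measurable_iSup_compl (Z := jointFamily e s Θ)
      (j := .inr (.inl m)) (by simpa using hmn))).sub (Finset.measurable_sum _ fun k _ => he k)
  filter_upwards [measure_eq_zero_iff_ae_notMem.1
    (hind.measure_eq_zero hZ (i := .inr (.inl n)) hlaw hY)] with ω hω h
  exact (hω (show _ = s n ω by rw [h, announcedTime]; ring)).elim

end AnnouncedTime

/-- Example 2.14: the jump times `S n` of a unit-rate Poisson process
(partial sums of i.i.d. standard exponential interarrival times `e`), independent
i.i.d. standard exponential delays `s`, announced times `U n = S n + s n`, an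
independent standard exponential threshold `Θ`, and
`τ = inf {t ≥ 0 : t + Σ_{U n ≤ t} 1 ≥ Θ}`.  Then `P(τ = t) = 0` for every
deterministic `t ≥ 0`, yet `P(τ = U n | S n, s n, τ ≥ U n) = 1 - e⁻¹`. -/
theorem announced_random_risky_times
    {Ω : Type*} [m0 : MeasurableSpace Ω] (P : Measure Ω) [IsProbabilityMeasure P]
    (e s : ℕ → Ω → ℝ) (Θ : Ω → ℝ)
    (he : ∀ n, Measurable (e n)) (hs : ∀ n, Measurable (s n)) (hΘ : Measurable Θ)
    (Z : (ℕ ⊕ ℕ ⊕ Unit) → Ω → ℝ)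
    (hZ : ∀ j, Z j = Sum.elim e (Sum.elim s (fun _ => Θ)) j)
    (hindep : iIndepFun (m := fun _ => borel ℝ) Z P)
    (hlaw : ∀ j, P.map (Z j) = expMeasure 1)
    (S U : ℕ → Ω → ℝ)
    (hS : ∀ n ω, S n ω = ∑ k ∈ Finset.range (n + 1), e k ω)
    (hU : ∀ n ω, U n ω = S n ω + s n ω)
    (Λ : ℝ → Ω → ℝ)
    (hΛ : ∀ t ω, Λ t ω = t + ∑' n : ℕ, (if U n ω ≤ t then (1:ℝ) else 0))
    (τ : Ω → ℝ)
    (hτ : ∀ ω, τ ω = sInf {t : ℝ | 0 ≤ t ∧ Θ ω ≤ Λ t ω}) :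
    (∀ t : ℝ, 0 ≤ t → P {ω | τ ω = t} = 0) ∧
    (∀ n : ℕ,
      (P[|{ω | U n ω ≤ τ ω}])[Set.indicator {ω | τ ω = U n ω} (fun _ => (1:ℝ)) |
          MeasurableSpace.comap (fun ω => (S n ω, s n ω)) inferInstance]
        =ᵐ[P[|{ω | U n ω ≤ τ ω}]] fun _ => 1 - Real.exp (-1)) := by
  obtain rfl : Z = jointFamily e s Θ := funext hZ
  obtain rfl : U = announcedTime e s := funext₂ fun n ω => by rw [hU, hS]; rfl
  obtain rfl : S = fun n ω => ∑ k ∈ Finset.range (n + 1), e k ω := funext₂ hS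
  obtain rfl : τ = fun ω => hitTime (clock (announcedTime e s · ω)) (Θ ω) :=
    funext fun ω => (hτ ω).trans (by simp only [hΛ]; rfl)
  have hZm : ∀ j, Measurable (jointFamily e s Θ j) := by
    rintro (k | k | _)
    exacts [he k, hs k, hΘ]
  have hpos : ∀ j, ∀ᵐ ω ∂P, 0 < jointFamily e s Θ j ω := fun j =>
    ae_pos_of_map_eq_expMeasure (hZm j).aemeasurable (hlaw j) one_pos
  have hspos : ∀ᵐ ω ∂P, ∀ n, 0 < s n ω := ae_all_iff.2 fun n => hpos (.inr (.inl n))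
  have hUpos : ∀ᵐ ω ∂P, ∀ n, 0 < announcedTime e s n ω := by
    filter_upwards [ae_all_iff.2 fun k => hpos (.inl k), hspos] with ω he hs n
    exact add_pos_of_nonneg_of_pos (Finset.sum_nonneg fun k _ => (he k).le) (hs n)
  have hUtop := ae_tendsto_announcedTime (hindep.precomp Sum.inl_injective) he
    (fun k => hlaw (.inl k)) (hspos.mono fun ω h n => (h n).le)
  refine ⟨fun t ht => measure_hitTime_clock_eq_zero hUtop hUpos (hpos (.inr (.inr ())))
    hΘ.aemeasurable (hlaw (.inr (.inr ()))) ht fun m =>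
      measure_announcedTime_eq_zero hindep hZm (hlaw (.inr (.inl m))) t, fun n => ?_⟩
  exact condExp_indicator_hitTime_clock_ae_eq (fun m => measurable_announcedTime he (hs m)) hΘ
    ((Finset.measurable_sum _ fun k _ => he k).prodMk (hs n)) hUtop (hUpos.mono fun ω h => h n)
    (ae_announcedTime_eq_imp_eq hindep hZm (hlaw (.inr (.inl n))))
    (indepFun_announcedTime_clock hindep hZm n) (hlaw (.inr (.inr ())))
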